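/- arXiv:2510.05809 — 5 statements merged into one kernel-verified Lean document; each statement's English description precedes it below -/
import Mathlib

section
/- Every coherent risk estimator ρ̂ : ℝⁿ → ℝ (monotone, cash additive, positively homogeneous, subadditive) admits a representation ρ̂(x) = sup_{a ∈ M} ⟨a, -x⟩ for some nonempty set M contained in the probability simplex {a ∈ ℝⁿ : aᵢ ≥ 0, Σᵢ aᵢ = 1}. -/
/-!
`x ↦ ρ (-x)` is sublinear, so by Hahn–Banach it is the pointwise maximum of the linear
functionals `x ↦ a ⬝ᵥ x` it dominates. Monotonicity forces every such `a` to be nonnegative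
(test against `-eᵢ`), and cash additivity forces `∑ aᵢ = 1` (test against `±1`).
-/

open Matrix

section Sublinear

variable {E : Type*} [AddCommGroup E] [Module ℝ E] {N : E → ℝ}

theorem map_zero_of_map_smul_of_pos (N_hom : ∀ c : ℝ, 0 < c → ∀ x, N (c • x) = c * N x) :
    N 0 = 0 := by
  have h := N_hom 2 two_pos 0
  rw [smul_zero] at h
  linarith

theorem mul_le_map_smul_of_sublinear (N_hom : ∀ c : ℝ, 0 < c → ∀ x, N (c • x) = c * N x)
    (N_add : ∀ x y, N (x + y) ≤ N x + N y) (c : ℝ) (z : E) : c * N z ≤ N (c • z) := by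
  have N_zero := map_zero_of_map_smul_of_pos N_hom
  rcases lt_trichotomy c 0 with hc | rfl | hc
  · have h_neg : 0 ≤ N z + N (-z) := by simpa [N_zero] using N_add z (-z)
    have h_smul : N (c • z) = -c * N (-z) := by
      rw [← N_hom (-c) (neg_pos.2 hc), neg_smul_neg]
    nlinarith
  · simp [N_zero]
  · exact (N_hom c hc z).ge

/-- Hahn–Banach, applied to `c • z ↦ c * N z` on the line through `z`. -/
theorem exists_linearMap_le_eq_of_sublinear (N_hom : ∀ c : ℝ, 0 < c → ∀ x, N (c • x) = c * N x)
    (N_add : ∀ x y, N (x + y) ≤ N x + N y) (z : E) :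
    ∃ g : E →ₗ[ℝ] ℝ, (∀ x, g x ≤ N x) ∧ g z = N z := by
  have N_zero := map_zero_of_map_smul_of_pos N_hom
  let f : E →ₗ.[ℝ] ℝ := LinearPMap.mkSpanSingleton' z (N z) fun c hc => by
    rcases smul_eq_zero.1 hc with rfl | rfl <;> simp [N_zero]
  obtain ⟨g, hgf, hgN⟩ := exists_extension_of_le_sublinear f N N_hom N_add <| by
    rintro ⟨_, hp⟩
    obtain ⟨c, rfl⟩ := Submodule.mem_span_singleton.1 hp
    calc f ⟨c • z, hp⟩ = c * N z := LinearPMap.mkSpanSingleton'_apply z (N z) _ c hp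
      _ ≤ N (c • z) := mul_le_map_smul_of_sublinear N_hom N_add c z
  refine ⟨g, hgN, ?_⟩
  rw [hgf ⟨z, Submodule.mem_span_singleton_self z⟩]
  exact LinearPMap.mkSpanSingleton'_apply_self _ _ _ _

end Sublinear

structure IsCoherentRiskEstimator {ι : Type*} (ρ : (ι → ℝ) → ℝ) : Prop where
  antitone : Antitone ρ
  map_add_const : ∀ x m, ρ (x + Function.const ι m) = ρ x - m
  map_smul : ∀ c : ℝ, 0 < c → ∀ x, ρ (c • x) = c * ρ x
  map_add_le : ∀ x y, ρ (x + y) ≤ ρ x + ρ y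

namespace IsCoherentRiskEstimator

variable {ι : Type*} [Fintype ι] [DecidableEq ι] {ρ : (ι → ℝ) → ℝ}

theorem exists_dotProduct_neg_le_eq (hρ : IsCoherentRiskEstimator ρ) (z : ι → ℝ) :
    ∃ a : ι → ℝ, (∀ x, a ⬝ᵥ -x ≤ ρ x) ∧ a ⬝ᵥ -z = ρ z := by
  obtain ⟨g, hgN, hgz⟩ := exists_linearMap_le_eq_of_sublinear (N := fun x => ρ (-x))
    (fun c hc x => by simpa only [smul_neg] using hρ.map_smul c hc (-x))
    (fun x y => by simpa only [neg_add] using hρ.map_add_le (-x) (-y)) (-z)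
  have hg : ∀ x, (dotProductEquiv ℝ ι).symm g ⬝ᵥ x = g x := fun x =>
    LinearMap.congr_fun ((dotProductEquiv ℝ ι).apply_symm_apply g) x
  refine ⟨(dotProductEquiv ℝ ι).symm g, fun x => ?_, ?_⟩
  · simpa [hg] using hgN (-x)
  · simpa [hg] using hgz

theorem mem_stdSimplex (hρ : IsCoherentRiskEstimator ρ) {a : ι → ℝ}
    (ha : ∀ x, a ⬝ᵥ -x ≤ ρ x) : a ∈ stdSimplex ℝ ι := by
  have ρ_zero : ρ 0 = 0 := map_zero_of_map_smul_of_pos hρ.map_smul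
  have ρ_one : ρ 1 = -1 := by simpa [ρ_zero] using hρ.map_add_const 0 1
  have ρ_neg_one : ρ (-1) = 1 := by
    show ρ (Function.const ι (-1)) = 1
    simpa [ρ_zero] using hρ.map_add_const 0 (-1)
  refine ⟨fun i => ?_, ?_⟩
  · have h_single : ρ (Pi.single i 1) ≤ 0 :=
      ρ_zero ▸ hρ.antitone (Pi.single_nonneg.2 zero_le_one)
    simpa [dotProduct_neg, dotProduct_single] using (ha (Pi.single i 1)).trans h_single
  · have h_le := ha (-1)
    have h_ge := ha 1
    simp only [neg_neg, dotProduct_neg, dotProduct_one, ρ_one, ρ_neg_one] at h_le h_ge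
    linarith

theorem isGreatest_dotProduct_neg (hρ : IsCoherentRiskEstimator ρ) (x : ι → ℝ) :
    IsGreatest ((fun a => a ⬝ᵥ -x) '' {a | ∀ y, a ⬝ᵥ -y ≤ ρ y}) (ρ x) := by
  obtain ⟨a, ha, hax⟩ := hρ.exists_dotProduct_neg_le_eq x
  exact ⟨⟨a, ha, hax⟩, by rintro _ ⟨b, hb, rfl⟩; exact hb x⟩

end IsCoherentRiskEstimator

theorem coherent_risk_estimator_representation_general {n : ℕ}
    (ρ : (Fin n → ℝ) → ℝ)
    (hmono : ∀ x y : Fin n → ℝ, (∀ i, y i ≤ x i) → ρ x ≤ ρ y)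
    (hcash : ∀ (x : Fin n → ℝ) (m : ℝ), ρ (fun i => x i + m) = ρ x - m)
    (hhom : ∀ (x : Fin n → ℝ) (l : ℝ), 0 ≤ l → ρ (fun i => l * x i) = l * ρ x)
    (hsub : ∀ x y : Fin n → ℝ, ρ (x + y) ≤ ρ x + ρ y) :
    ∃ M : Set (Fin n → ℝ), M.Nonempty ∧
      (∀ a ∈ M, (∀ i, 0 ≤ a i) ∧ ∑ i, a i = 1) ∧
      ∀ x, ρ x = sSup ((fun a => ∑ i, a i * (-x i)) '' M) := by
  have hρ : IsCoherentRiskEstimator ρ :=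
    ⟨fun y x h => hmono x y h, hcash, fun c hc x => hhom x c hc.le, hsub⟩
  obtain ⟨a, ha, -⟩ := hρ.exists_dotProduct_neg_le_eq 0
  refine ⟨{a | ∀ y, a ⬝ᵥ -y ≤ ρ y}, ⟨a, ha⟩, fun b hb => hρ.mem_stdSimplex hb,
    fun x => (hρ.isGreatest_dotProduct_neg x).csSup_eq.symm⟩

/-- Every coherent risk estimator `ρ̂ : ℝⁿ → ℝ` admits a robust representation
`ρ̂(x) = sup_{a ∈ M} ⟨a, -x⟩` for some nonempty subset `M` of the probability simplex. -/
theorem coherent_risk_estimator_representation {n : ℕ} (hn : 1 ≤ n)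
    (ρ : (Fin n → ℝ) → ℝ)
    (hmono : ∀ x y : Fin n → ℝ, (∀ i, y i ≤ x i) → ρ x ≤ ρ y)
    (hcash : ∀ (x : Fin n → ℝ) (m : ℝ), ρ (fun i => x i + m) = ρ x - m)
    (hhom : ∀ (x : Fin n → ℝ) (l : ℝ), 0 ≤ l → ρ (fun i => l * x i) = l * ρ x)
    (hsub : ∀ x y : Fin n → ℝ, ρ (x + y) ≤ ρ x + ρ y) :
    ∃ M : Set (Fin n → ℝ), M.Nonempty ∧
      (∀ a ∈ M, (∀ i, 0 ≤ a i) ∧ ∑ i, a i = 1) ∧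
      ∀ x, ρ x = sSup ((fun a => ∑ i, a i * (-x i)) '' M) :=
  coherent_risk_estimator_representation_general ρ hmono hcash hhom hsub
end

section
/- For n ∈ ℕ and α ∈ (0,1) with ⌊nα⌋ ≥ 1, the empirical expected shortfall estimator ÊS(x) := −(1/⌊nα⌋) Σ_{i=1}^{⌊nα⌋} x_{i:n}, where x_{1:n} ≤ … ≤ x_{n:n} are the order statistics of x ∈ ℝⁿ, is subadditive: ÊS(x+y) ≤ ÊS(x) + ÊS(y) for all x, y ∈ ℝⁿ. -/
open Finset

/-- `sortVec x` is the nondecreasing rearrangement of `x`. -/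
noncomputable def sortVec {n : ℕ} (x : Fin n → ℝ) : Fin n → ℝ := x ∘ Tuple.sort x

/-- The empirical expected shortfall estimator: minus the average of the `k` smallest
coordinates. -/
noncomputable def empES {n : ℕ} (k : ℕ) (x : Fin n → ℝ) : ℝ :=
  -((k : ℝ)⁻¹ * ∑ i ∈ Finset.univ.filter (fun i : Fin n => (i : ℕ) < k), sortVec x i)

lemma filter_lt_eq_map {n k : ℕ} (hkn : k ≤ n) :
    (univ.filter fun i : Fin n => (i : ℕ) < k)
      = Finset.map (Fin.castLEEmb hkn) univ := by
  ext i
  simp only [mem_filter, mem_univ, true_and, mem_map, Fin.castLEEmb_apply]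
  constructor
  · intro hi
    exact ⟨⟨i, hi⟩, rfl⟩
  · rintro ⟨j, rfl⟩; exact j.isLt

lemma le_apply_fin_aux {k n : ℕ} (e : Fin k ↪o Fin n) :
    ∀ m (j : Fin k), (j : ℕ) = m → m ≤ (e j : ℕ) := by
  intro m
  induction m with
  | zero => intro j _; exact Nat.zero_le _
  | succ i ih =>
    intro j hj
    have hik : i < k := by have := j.isLt; omega
    have h1 : i ≤ (e ⟨i, hik⟩ : ℕ) := ih ⟨i, hik⟩ rfl
    have h2 : e ⟨i, hik⟩ < e j := e.strictMono (by rw [Fin.lt_def]; simp; omega)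
    rw [Fin.lt_def] at h2
    omega

lemma le_apply_fin {k n : ℕ} (e : Fin k ↪o Fin n) (j : Fin k) : (j : ℕ) ≤ (e j : ℕ) :=
  le_apply_fin_aux e _ j rfl


lemma mono_min_sum {n k : ℕ} (f : Fin n → ℝ) (hf : Monotone f) (hkn : k ≤ n)
    (T : Finset (Fin n)) (hT : T.card = k) :
    ∑ i ∈ univ.filter (fun i : Fin n => (i : ℕ) < k), f i ≤ ∑ i ∈ T, f i := by
  rw [filter_lt_eq_map hkn, Finset.sum_map]
  have hTm : T = Finset.map (T.orderEmbOfFin hT).toEmbedding univ := by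
    ext i
    simp only [mem_map, mem_univ, true_and, RelEmbedding.coe_toEmbedding]
    rw [← Finset.mem_coe, ← Finset.range_orderEmbOfFin T hT]
    simp [Set.range, eq_comm]
  rw [hTm, Finset.sum_map]
  apply Finset.sum_le_sum
  intro j _
  apply hf
  simp only [RelEmbedding.coe_toEmbedding]
  rw [Fin.le_def]
  simpa using le_apply_fin (T.orderEmbOfFin hT) j

lemma min_subset_sum {n k : ℕ} (hkn : k ≤ n) (z : Fin n → ℝ)
    (T : Finset (Fin n)) (hT : T.card = k) :
    ∑ i ∈ univ.filter (fun i : Fin n => (i : ℕ) < k), sortVec z i ≤ ∑ i ∈ T, z i := by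
  have h1 : ∑ j ∈ T.image (Tuple.sort z).symm, (z ∘ Tuple.sort z) j = ∑ i ∈ T, z i := by
    rw [Finset.sum_image (fun a _ b _ h => (Tuple.sort z).symm.injective h)]
    simp
  rw [← h1]
  exact mono_min_sum _ (Tuple.monotone_sort z) hkn _
    (by rw [Finset.card_image_of_injective _ (Equiv.injective _), hT])

/-- The empirical ES estimator at level `α` (averaging the `⌊nα⌋` smallest order
statistics with a minus sign) is subadditive. -/
theorem empES_subadditive {n : ℕ} (α : ℝ) (hα : α ∈ Set.Ioo (0 : ℝ) 1)
    (hk : 1 ≤ ⌊(n : ℝ) * α⌋₊) (x y : Fin n → ℝ) :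
    empES ⌊(n : ℝ) * α⌋₊ (x + y) ≤ empES ⌊(n : ℝ) * α⌋₊ x + empES ⌊(n : ℝ) * α⌋₊ y := by
  set k := ⌊(n : ℝ) * α⌋₊ with hkdef
  have hkn : k ≤ n := by
    calc k ≤ ⌊(n : ℝ)⌋₊ := Nat.floor_le_floor
            (mul_le_of_le_one_right (by positivity) hα.2.le)
      _ = n := Nat.floor_natCast n
  -- the set of k smallest indices after sorting x+y
  set σ := Tuple.sort (x + y) with hσ
  set T : Finset (Fin n) := (univ.filter fun i : Fin n => (i : ℕ) < k).image σ with hTdef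
  have hcard : T.card = k := by
    rw [hTdef, Finset.card_image_of_injective _ (Equiv.injective _),
      filter_lt_eq_map hkn, Finset.card_map, Finset.card_univ, Fintype.card_fin]
  have hsum : ∑ i ∈ univ.filter (fun i : Fin n => (i : ℕ) < k), sortVec (x + y) i
      = (∑ i ∈ T, x i) + ∑ i ∈ T, y i := by
    rw [hTdef, Finset.sum_image (fun a _ b _ h => (Equiv.injective σ) h),
      Finset.sum_image (fun a _ b _ h => (Equiv.injective σ) h), ← Finset.sum_add_distrib]
    rfl
  have hx := min_subset_sum hkn x T hcard
  have hy := min_subset_sum hkn y T hcard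
  unfold empES
  rw [← neg_add, ← mul_add, neg_le_neg_iff]
  apply mul_le_mul_of_nonneg_left _ (by positivity)
  rw [hsum]
  exact add_le_add hx hy
end

section
/- Let ρ̂ : ℝⁿ → ℝ be defined by ρ̂(x) = sup_{a ∈ M} ⟨a, -s(x)⟩ where s(x) is the increasing rearrangement of x and M is a nonempty bounded set of probability vectors a with a₁ ≥ a₂ ≥ … ≥ aₙ ≥ 0 and Σaᵢ = 1. Then ρ̂ is a law-invariant coherent risk estimator: it is permutation invariant, monotone decreasing, cash additive, positively homogeneous, and subadditive. -/
/-!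
Each functional `x ↦ ⟨a, -s(x)⟩` with `a` a nonincreasing probability vector is already a
law-invariant coherent risk estimator. Subadditivity is the rearrangement inequality: if `σ`
sorts `x + y`, then `s(x + y) = x ∘ σ + y ∘ σ`, and pairing the nonincreasing `a` with the
nondecreasing `s(x)` gives a smaller sum than pairing it with `x ∘ σ`. All five properties pass
to the supremum over `M`, which is finite since every term is at most `‖x‖` (sup norm).
-/

open Finset

section

variable {n : ℕ}

theorem sortVec_monotone (x : Fin n → ℝ) : Monotone (sortVec x) :=
  Tuple.monotone_sort x

theorem sortVec_comp_perm (x : Fin n → ℝ) (σ : Equiv.Perm (Fin n)) :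
    sortVec (x ∘ σ) = sortVec x :=
  Tuple.comp_perm_comp_sort_eq_comp_sort

theorem sortVec_comp_of_monotone {f : ℝ → ℝ} (hf : Monotone f) (x : Fin n → ℝ) :
    sortVec (f ∘ x) = f ∘ sortVec x :=
  Tuple.unique_monotone (Tuple.monotone_sort _) (hf.comp (sortVec_monotone x))

theorem sortVec_mono {x y : Fin n → ℝ} (h : x ≤ y) : sortVec x ≤ sortVec y := by
  intro i
  -- The `n - i` entries of `x` sorted at or above `i` and the `i + 1` entries of `y` sorted at
  -- or below `i` cannot have disjoint index sets.
  obtain ⟨k, hk⟩ := inter_nonempty_of_card_lt_card_add_card (subset_univ _) (subset_univ _)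
    (t := (Ici i).map (Tuple.sort x).toEmbedding) (u := (Iic i).map (Tuple.sort y).toEmbedding)
    (by simp only [card_univ, Fintype.card_fin, card_map, Fin.card_Ici, Fin.card_Iic]; omega)
  simp only [mem_inter, mem_map_equiv, mem_Ici, mem_Iic] at hk
  calc sortVec x i ≤ sortVec x ((Tuple.sort x).symm k) := sortVec_monotone x hk.1
    _ = x k := by simp [sortVec]
    _ ≤ y k := h k
    _ = sortVec y ((Tuple.sort y).symm k) := by simp [sortVec]
    _ ≤ sortVec y i := sortVec_monotone y hk.2

theorem sum_mul_sortVec_le_sum_mul_comp_perm {a : Fin n → ℝ} (ha : Antitone a)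
    (x : Fin n → ℝ) (σ : Equiv.Perm (Fin n)) :
    ∑ i, a i * sortVec x i ≤ ∑ i, a i * x (σ i) := by
  simpa [sortVec] using
    (ha.antivary (sortVec_monotone x)).sum_mul_le_sum_mul_comp_perm (σ := σ.trans (Tuple.sort x)⁻¹)

noncomputable def spectralRisk (a x : Fin n → ℝ) : ℝ :=
  ∑ i, a i * -sortVec x i

section spectralRisk

variable {a : Fin n → ℝ}

theorem spectralRisk_comp_perm (x : Fin n → ℝ) (σ : Equiv.Perm (Fin n)) :
    spectralRisk a (x ∘ σ) = spectralRisk a x := by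
  rw [spectralRisk, sortVec_comp_perm, spectralRisk]

theorem spectralRisk_antitone (ha : 0 ≤ a) : Antitone (spectralRisk a) := fun _ _ hxy =>
  sum_le_sum fun i _ => mul_le_mul_of_nonneg_left (neg_le_neg (sortVec_mono hxy i)) (ha i)

theorem spectralRisk_add_const (ha : ∑ i, a i = 1) (x : Fin n → ℝ) (m : ℝ) :
    spectralRisk a (fun i => x i + m) = spectralRisk a x - m := by
  have hs := sortVec_comp_of_monotone (add_left_mono (a := m)) x
  simp only [spectralRisk, Function.comp_def] at hs ⊢
  simp only [hs, neg_add, mul_add, sum_add_distrib, ← sum_mul, ha]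
  ring

theorem spectralRisk_const_mul (x : Fin n → ℝ) {l : ℝ} (hl : 0 ≤ l) :
    spectralRisk a (fun i => l * x i) = l * spectralRisk a x := by
  have hs := sortVec_comp_of_monotone (monotone_mul_left_of_nonneg hl) x
  simp only [spectralRisk, Function.comp_def] at hs ⊢
  simp only [hs, mul_sum]
  exact sum_congr rfl fun i _ => by ring

theorem spectralRisk_add_le (ha : Antitone a) (x y : Fin n → ℝ) :
    spectralRisk a (x + y) ≤ spectralRisk a x + spectralRisk a y := by
  have hx := sum_mul_sortVec_le_sum_mul_comp_perm ha x (Tuple.sort (x + y))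
  have hy := sum_mul_sortVec_le_sum_mul_comp_perm ha y (Tuple.sort (x + y))
  have hxy : ∑ i, a i * sortVec (x + y) i
      = ∑ i, a i * x (Tuple.sort (x + y) i) + ∑ i, a i * y (Tuple.sort (x + y) i) := by
    simp only [sortVec, Function.comp_apply, Pi.add_apply, mul_add, sum_add_distrib]
  simp only [spectralRisk, mul_neg, sum_neg_distrib]
  linarith

theorem spectralRisk_le_norm (ha₀ : 0 ≤ a) (ha₁ : ∑ i, a i = 1) (x : Fin n → ℝ) :
    spectralRisk a x ≤ ‖x‖ :=
  calc spectralRisk a x ≤ ∑ i, a i * ‖x‖ := sum_le_sum fun i _ =>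
        mul_le_mul_of_nonneg_left ((neg_le_abs _).trans (norm_le_pi_norm x _)) (ha₀ i)
    _ = ‖x‖ := by rw [← sum_mul, ha₁, one_mul]

end spectralRisk

end

theorem law_invariant_CRE_of_sorted_sup_representation_general {n : ℕ}
    (M : Set (Fin n → ℝ)) (hMne : M.Nonempty)
    (hM : ∀ a ∈ M, (∀ i j : Fin n, i ≤ j → a j ≤ a i) ∧ (∀ i, 0 ≤ a i) ∧ ∑ i, a i = 1)
    (ρ : (Fin n → ℝ) → ℝ)
    (hρ : ∀ x, ρ x = sSup ((fun a => ∑ i, a i * (-(sortVec x i))) '' M)) :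
    (∀ (x : Fin n → ℝ) (σ : Equiv.Perm (Fin n)), ρ (x ∘ σ) = ρ x) ∧
    (∀ x y : Fin n → ℝ, (∀ i, y i ≤ x i) → ρ x ≤ ρ y) ∧
    (∀ (x : Fin n → ℝ) (m : ℝ), ρ (fun i => x i + m) = ρ x - m) ∧
    (∀ (x : Fin n → ℝ) (l : ℝ), 0 ≤ l → ρ (fun i => l * x i) = l * ρ x) ∧
    (∀ x y : Fin n → ℝ, ρ (x + y) ≤ ρ x + ρ y) := by
  have : Nonempty M := hMne.to_subtype
  replace hρ : ∀ x, ρ x = ⨆ a : M, spectralRisk a x := fun x => by rw [hρ, sSup_image']; rfl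
  have hbdd (x : Fin n → ℝ) : BddAbove (Set.range fun a : M => spectralRisk a x) :=
    ⟨‖x‖, Set.forall_mem_range.2 fun a =>
      spectralRisk_le_norm (hM a a.2).2.1 (hM a a.2).2.2 x⟩
  refine ⟨fun x σ => ?_, fun x y hxy => ?_, fun x m => ?_, fun x l hl => ?_, fun x y => ?_⟩
  · simp only [hρ, spectralRisk_comp_perm]
  · rw [hρ, hρ]
    exact ciSup_mono (hbdd y) fun a => spectralRisk_antitone (hM a a.2).2.1 hxy
  · have hshift := (OrderIso.addRight (-m)).map_ciSup (hbdd x)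
    simp only [OrderIso.addRight_apply, ← sub_eq_add_neg] at hshift
    simp only [hρ, hshift, spectralRisk_add_const (hM _ (Subtype.prop _)).2.2]
  · simp only [hρ, Real.mul_iSup_of_nonneg hl, spectralRisk_const_mul _ hl]
  · rw [hρ, hρ, hρ]
    exact ciSup_le fun a => (spectralRisk_add_le (fun i j => (hM a a.2).1 i j) x y).trans
      (add_le_add (le_ciSup (hbdd x) a) (le_ciSup (hbdd y) a))

/-- If `ρ̂(x) = sup_{a ∈ M} ⟨a, -s(x)⟩` where `M` is a nonempty set of probability
vectors with nonincreasing coordinates, then `ρ̂` is a law-invariant coherent risk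
estimator: permutation invariant, monotone decreasing, cash additive, positively
homogeneous, and subadditive. -/
theorem law_invariant_CRE_of_sorted_sup_representation {n : ℕ} (hn : 1 ≤ n)
    (M : Set (Fin n → ℝ)) (hMne : M.Nonempty)
    (hM : ∀ a ∈ M, (∀ i j : Fin n, i ≤ j → a j ≤ a i) ∧ (∀ i, 0 ≤ a i) ∧ ∑ i, a i = 1)
    (ρ : (Fin n → ℝ) → ℝ)
    (hρ : ∀ x, ρ x = sSup ((fun a => ∑ i, a i * (-(sortVec x i))) '' M)) :
    (∀ (x : Fin n → ℝ) (σ : Equiv.Perm (Fin n)), ρ (x ∘ σ) = ρ x) ∧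
    (∀ x y : Fin n → ℝ, (∀ i, y i ≤ x i) → ρ x ≤ ρ y) ∧
    (∀ (x : Fin n → ℝ) (m : ℝ), ρ (fun i => x i + m) = ρ x - m) ∧
    (∀ (x : Fin n → ℝ) (l : ℝ), 0 ≤ l → ρ (fun i => l * x i) = l * ρ x) ∧
    (∀ x y : Fin n → ℝ, ρ (x + y) ≤ ρ x + ρ y) :=
  law_invariant_CRE_of_sorted_sup_representation_general M hMne hM ρ hρ
end

section
/- If x, y ∈ ℝⁿ are comonotonic (i.e., (xᵢ − xⱼ)(yᵢ − yⱼ) ≥ 0 for all i, j), then the order statistics of the sum equal the sums of order statistics: (x + y)_{i:n} = x_{i:n} + y_{i:n} for every i = 1,…,n. -/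
open Finset

/-! Comonotonicity is `Monovary`. Comonotone vectors are sorted by one common permutation,
namely any permutation sorting their sum: if `f` and `g` monovary, a tie or an increase of
`f + g` forces `f` and `g` themselves to weakly increase. Sorting is then additive by
uniqueness of the monotone rearrangement. -/

section Monovary

variable {ι κ α : Type*} [AddCommMonoid α] [LinearOrder α] [IsOrderedCancelAddMonoid α]
  {f g : ι → α}

theorem Monovary.le_left_of_add_le_add (h : Monovary f g) {i j : ι}
    (hij : f i + g i ≤ f j + g j) : f i ≤ f j := by
  by_contra! hf
  have hg : g i < g j := lt_of_add_lt_add_left (hij.trans_lt (add_lt_add_of_lt_of_le hf le_rfl))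
  exact hf.not_ge (h hg)

theorem Monovary.le_right_of_add_le_add (h : Monovary f g) {i j : ι}
    (hij : f i + g i ≤ f j + g j) : g i ≤ g j :=
  h.symm.le_left_of_add_le_add (by rwa [add_comm (g i), add_comm (g j)])

variable [Preorder κ] {σ : κ → ι}

theorem Monovary.monotone_comp_left_of_monotone_add (h : Monovary f g)
    (hσ : Monotone ((f + g) ∘ σ)) : Monotone (f ∘ σ) :=
  fun _ _ hab ↦ h.le_left_of_add_le_add (hσ hab)

theorem Monovary.monotone_comp_right_of_monotone_add (h : Monovary f g)
    (hσ : Monotone ((f + g) ∘ σ)) : Monotone (g ∘ σ) :=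
  fun _ _ hab ↦ h.le_right_of_add_le_add (hσ hab)

end Monovary

theorem Monovary.add_comp_sort_add {n : ℕ} {α : Type*} [AddCommMonoid α] [LinearOrder α]
    [IsOrderedCancelAddMonoid α] {f g : Fin n → α} (h : Monovary f g) :
    (f + g) ∘ Tuple.sort (f + g) = f ∘ Tuple.sort f + g ∘ Tuple.sort g := by
  have hsum := Tuple.monotone_sort (f + g)
  rw [Tuple.unique_monotone (Tuple.monotone_sort f)
      (h.monotone_comp_left_of_monotone_add hsum),
    Tuple.unique_monotone (Tuple.monotone_sort g)
      (h.monotone_comp_right_of_monotone_add hsum)]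
  rfl

/-- If `x` and `y` are comonotonic, the order statistics of the sum equal the sums of
the order statistics. -/
theorem sortVec_add_of_comonotone {n : ℕ} (x y : Fin n → ℝ)
    (hcom : ∀ i j : Fin n, 0 ≤ (x i - x j) * (y i - y j)) :
    ∀ i : Fin n, sortVec (x + y) i = sortVec x i + sortVec y i :=
  congrFun (monovary_iff_forall_mul_nonneg.2 fun i j ↦ hcom j i).add_comp_sort_add
end

section
/- The Gaussian parametric plug-in ES estimator is not monotone: define ρ̂(x) := −( μ̂(x) − c·σ̂(x) ) for x ∈ ℝ², where μ̂ is the sample mean, σ̂ the sample standard deviation (with denominator n−1 = 1), and c := φ(Φ⁻¹(0.01))/0.01 (any constant c > 1/√2 suffices). Then x = (1,0) ≥ x' = (0,0) coordinatewise, yet ρ̂(x) = −1/2 + c/√2 > 0 = ρ̂(x'). -/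
/-- The Gaussian parametric plug-in ES estimator is not monotone: for any constant
`c > 1/√2` (in particular the Gaussian constant `φ(Φ⁻¹(0.01))/0.01 ≈ 2.66`), the
estimator `ρ̂(x) = -(μ̂(x) - c·σ̂(x))` on ℝ² satisfies `ρ̂(1,0) = -1/2 + c/√2 > 0 = ρ̂(0,0)`
although `(1,0) ≥ (0,0)` coordinatewise. -/
theorem gaussian_plugin_ES_not_monotone (c : ℝ) (hc : 1 / Real.sqrt 2 < c) :
    let ρ : ℝ × ℝ → ℝ := fun p => -((p.1 + p.2) / 2 - c * (|p.1 - p.2| / Real.sqrt 2))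
    ρ (1, 0) = -(1 / 2) + c / Real.sqrt 2 ∧ 0 < ρ (1, 0) ∧ ρ (0, 0) = 0 := by
  have hs : (0:ℝ) < Real.sqrt 2 := Real.sqrt_pos.mpr (by norm_num)
  intro ρ
  have h1 : ρ (1, 0) = -(1 / 2) + c / Real.sqrt 2 := by
    simp only [ρ]
    rw [abs_of_pos (by norm_num : (0:ℝ) < (1:ℝ) - 0)]
    ring
  refine ⟨h1, ?_, by simp [ρ]⟩
  rw [h1]
  have : 1 / 2 < c / Real.sqrt 2 := by
    rw [div_lt_iff₀ hs] at hc; rw [lt_div_iff₀ hs]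
    nlinarith [Real.sq_sqrt (by norm_num : (0:ℝ) ≤ 2), hc]
  linarith
end
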